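/- Let w be a finite rich word, let p be the longest palindromic prefix of a non-palindromic factor u of w, and let q be the longest palindromic suffix of u. Then p and q are unioccurrent in u. -/

import Mathlib

/-- The finset of (distinct) palindromic factors of a finite word `w`,
including the empty word. -/
def palFactors {A : Type*} [DecidableEq A] (w : List A) : Finset (List A) :=
  ((w.inits.flatMap List.tails).filter (fun u => u.reverse = u)).toFinset

/-- A finite word `w` is rich if it has exactly `|w| + 1` distinct palindromic factors. -/
def Rich {A : Type*} [DecidableEq A] (w : List A) : Prop :=
  (palFactors w).card = w.length + 1

/-- `p` is the longest palindromic prefix of `u`. -/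
def LongestPalPrefix {A : Type*} (p u : List A) : Prop :=
  p <+: u ∧ p.reverse = p ∧ ∀ p' : List A, p' <+: u → p'.reverse = p' → p'.length ≤ p.length

/-- `q` is the longest palindromic suffix of `u`. -/
def LongestPalSuffix {A : Type*} (q u : List A) : Prop :=
  q <:+ u ∧ q.reverse = q ∧ ∀ q' : List A, q' <:+ u → q'.reverse = q' → q'.length ≤ q.length

/-- A non-empty word `u` is unioccurrent in `v` if there is exactly one pair of
words `(s, t)` with `v = s ++ u ++ t`. -/
def Unioccurrent {A : Type*} (u v : List A) : Prop :=
  u ≠ [] ∧ ∃! st : List A × List A, v = st.1 ++ u ++ st.2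

/-!
Appending a letter to a word creates at most one new palindromic factor, namely the longest
palindromic suffix of the extended word: every shorter palindromic suffix is reflected inside it
and so already occurs earlier. Hence a word `v` has at most `|v| + 1` palindromic factors, and in a
rich word each prefix must gain a new one. For a non-empty rich `u = v ++ [a]` this says that the
longest palindromic suffix of `u` does not occur in `v`, so its only occurrence in `u` is as a
suffix. Richness is inherited by factors and reversal, and reversal exchanges the longest
palindromic prefix with the longest palindromic suffix.
-/

open List

section Words

variable {A : Type*}

lemma infix_of_append_singleton_eq {v s x t : List A} {a : A} (h : v ++ [a] = s ++ x ++ t)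
    (ht : t ≠ []) : x <:+: v := by
  obtain ⟨t', b, rfl⟩ := (eq_nil_or_concat' t).resolve_left ht
  rw [← append_assoc] at h
  exact ⟨s, t', (append_inj' h rfl).1.symm⟩

lemma LongestPalSuffix.infix_of_suffix_of_ne {v q x : List A} {a : A}
    (hq : LongestPalSuffix q (v ++ [a])) (hx : x <:+ v ++ [a]) (hxpal : x.reverse = x)
    (hne : x ≠ q) : x <:+: v := by
  have hxq : x <:+ q := suffix_of_suffix_length_le hx hq.1 (hq.2.2 x hx hxpal)
  obtain ⟨r, rfl⟩ : x <+: q := by simpa [hxpal, hq.2.1] using reverse_prefix.2 hxq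
  obtain ⟨s, hs⟩ := hq.1
  exact infix_of_append_singleton_eq (hs.symm.trans (append_assoc s x r).symm)
    (by rintro rfl; exact hne (append_nil x).symm)

lemma LongestPalPrefix.longestPalSuffix_reverse {p u : List A} (hp : LongestPalPrefix p u) :
    LongestPalSuffix p u.reverse := by
  obtain ⟨hpu, hpal, hmax⟩ := hp
  refine ⟨by simpa [hpal] using reverse_suffix.2 hpu, hpal, fun q hq hqpal => ?_⟩
  simpa using hmax q.reverse (by simpa using reverse_prefix.2 hq) (by simp [hqpal])

lemma exists_longestPalSuffix (u : List A) : ∃ q, LongestPalSuffix q u := by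
  induction u with
  | nil => exact ⟨[], suffix_refl _, rfl, fun q hq _ => hq.length_le⟩
  | cons a u ih =>
    by_cases hpal : (a :: u).reverse = a :: u
    · exact ⟨a :: u, suffix_refl _, hpal, fun q hq _ => hq.length_le⟩
    · obtain ⟨q, hqu, hqpal, hmax⟩ := ih
      refine ⟨q, hqu.trans (suffix_cons a u), hqpal, fun q' hq' hq'pal => ?_⟩
      rcases suffix_cons_iff.1 hq' with rfl | hq'u
      · exact absurd hq'pal hpal
      · exact hmax q' hq'u hq'pal

lemma Unioccurrent.reverse {x l : List A} (h : Unioccurrent x l) :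
    Unioccurrent x.reverse l.reverse := by
  obtain ⟨hne, ⟨s, t⟩, rfl, huniq⟩ := h
  refine ⟨by simpa using hne, ⟨t.reverse, s.reverse⟩, by simp, ?_⟩
  rintro ⟨s', t'⟩ h'
  have hl : s ++ x ++ t = t'.reverse ++ x ++ s'.reverse := by
    simpa using congrArg List.reverse h'
  have := huniq (t'.reverse, s'.reverse) hl
  simp only [Prod.mk.injEq] at this ⊢
  obtain ⟨rfl, rfl⟩ := this
  simp

lemma unioccurrent_of_suffix_of_not_infix {x v : List A} {a : A} (hx : x <:+ v ++ [a])
    (hxv : ¬ x <:+: v) : Unioccurrent x (v ++ [a]) := by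
  have hne : x ≠ [] := by rintro rfl; exact hxv nil_infix
  obtain ⟨s, hs⟩ := hx
  refine ⟨hne, ⟨s, []⟩, by simp [hs], ?_⟩
  rintro ⟨s', t'⟩ h
  obtain rfl : t' = [] := by
    by_contra ht'
    exact hxv (infix_of_append_singleton_eq h ht')
  simp only [append_nil, Prod.mk.injEq, and_true] at h ⊢
  exact append_cancel_right (h.symm.trans hs.symm)

section PalFactors

variable [DecidableEq A]

lemma mem_palFactors {x v : List A} : x ∈ palFactors v ↔ x <:+: v ∧ x.reverse = x := by
  simp [palFactors, infix_iff_suffix_prefix, and_comm]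

lemma palFactors_append_singleton_subset {v q : List A} {a : A}
    (hq : LongestPalSuffix q (v ++ [a])) : palFactors (v ++ [a]) ⊆ insert q (palFactors v) := by
  intro x hx
  obtain ⟨hxva, hxpal⟩ := mem_palFactors.1 hx
  rw [Finset.mem_insert, mem_palFactors]
  by_cases hxq : x = q
  · exact .inl hxq
  · refine .inr ⟨?_, hxpal⟩
    rcases infix_concat_iff.1 hxva with hsuf | hinf
    · exact hq.infix_of_suffix_of_ne hsuf hxpal hxq
    · exact hinf

lemma card_palFactors_append_le (v t : List A) :
    (palFactors (v ++ t)).card ≤ (palFactors v).card + t.length := by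
  induction t using List.reverseRecOn with
  | nil => simp
  | append_singleton t a ih =>
    obtain ⟨q, hq⟩ := exists_longestPalSuffix (v ++ t ++ [a])
    calc (palFactors (v ++ (t ++ [a]))).card
        ≤ (insert q (palFactors (v ++ t))).card := by
          rw [← append_assoc]; exact Finset.card_le_card (palFactors_append_singleton_subset hq)
      _ ≤ (palFactors (v ++ t)).card + 1 := Finset.card_insert_le _ _
      _ ≤ (palFactors v).card + (t ++ [a]).length := by simp; omega

lemma card_palFactors_le (v : List A) : (palFactors v).card ≤ v.length + 1 := by
  have h0 : (palFactors ([] : List A)).card = 1 := rfl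
  simpa [h0, add_comm] using card_palFactors_append_le [] v

lemma palFactors_reverse (v : List A) :
    palFactors v.reverse = (palFactors v).image List.reverse := by
  ext x
  simp only [Finset.mem_image, mem_palFactors]
  constructor
  · rintro ⟨hx, hxpal⟩
    exact ⟨x, ⟨by simpa [hxpal] using reverse_infix.2 hx, hxpal⟩, hxpal⟩
  · rintro ⟨y, ⟨hy, hypal⟩, rfl⟩
    exact ⟨reverse_infix.2 hy, by simp [hypal]⟩

lemma Rich.reverse {v : List A} (h : Rich v) : Rich v.reverse := by
  rwa [Rich, palFactors_reverse, Finset.card_image_of_injective _ reverse_injective,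
    length_reverse]

lemma Rich.of_prefix {w v : List A} (hw : Rich w) (h : v <+: w) : Rich v := by
  obtain ⟨t, rfl⟩ := h
  have := card_palFactors_append_le v t
  have := card_palFactors_le v
  rw [Rich, length_append] at hw
  unfold Rich
  omega

lemma Rich.of_infix {w v : List A} (hw : Rich w) (h : v <:+: w) : Rich v := by
  obtain ⟨s, t, rfl⟩ := h
  have hsv : Rich (s ++ v).reverse := (hw.of_prefix (prefix_append _ t)).reverse
  have hv : Rich v.reverse := hsv.of_prefix (by rw [reverse_append]; exact prefix_append _ _)
  simpa using hv.reverse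

lemma LongestPalSuffix.not_infix_of_rich {v q : List A} {a : A} (hu : Rich (v ++ [a]))
    (hq : LongestPalSuffix q (v ++ [a])) : ¬ q <:+: v := by
  intro hqv
  have hsub := palFactors_append_singleton_subset hq
  rw [Finset.insert_eq_of_mem (mem_palFactors.2 ⟨hqv, hq.2.1⟩)] at hsub
  have := Finset.card_le_card hsub
  have := card_palFactors_le v
  rw [Rich, length_append] at hu
  simp only [length_singleton] at hu
  omega

lemma LongestPalSuffix.unioccurrent {u q : List A} (hu : Rich u) (hne : u ≠ [])
    (hq : LongestPalSuffix q u) : Unioccurrent q u := by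
  obtain ⟨v, a, rfl⟩ := (eq_nil_or_concat' u).resolve_left hne
  exact unioccurrent_of_suffix_of_not_infix hq.1 (hq.not_infix_of_rich hu)

end PalFactors

end Words

/-- If `u` is a non-palindromic factor of a finite rich word `w` with longest
palindromic prefix `p` and longest palindromic suffix `q`, then `p` and `q` are
unioccurrent in `u`. -/
theorem longest_pal_prefix_suffix_unioccurrent {A : Type*} [DecidableEq A]
    (w u p q : List A) (hw : Rich w) (hu : u <:+: w) (hnp : u.reverse ≠ u)
    (hp : LongestPalPrefix p u) (hq : LongestPalSuffix q u) :
    Unioccurrent p u ∧ Unioccurrent q u := by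
  have hrich : Rich u := hw.of_infix hu
  have hne : u ≠ [] := by rintro rfl; exact hnp rfl
  refine ⟨?_, hq.unioccurrent hrich hne⟩
  have hp' := (hp.longestPalSuffix_reverse.unioccurrent hrich.reverse (by simpa using hne)).reverse
  rwa [hp.2.1, reverse_reverse] at hp'
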